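/- If G is a connected graph of order n ≥ 2 and α ∈ [1/2, 1], then the number of eigenvalues of A_α(G) in [α, Δ(G)], counted with multiplicity, is at least the edge covering number β(G). -/

import Mathlib

/-!
Gershgorin's theorem puts every eigenvalue of `A_α` below `Δ`: row `k` has diagonal entry `α d_k`
and off-diagonal mass `(1 - α) d_k`.

In a minimum edge cover every edge has a private endpoint, covered by no other edge of the cover;
choosing one per edge gives a set `T` of `β` vertices, each adjacent to a vertex outside `T`. On
vectors `x` supported on `T` the quadratic form of `A_α` is at least `α ‖x‖²`: summed edge by
edge, an edge `uv` leaving `T` at `v` contributes `α x_u²`, and an edge inside `T` contributes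
`(1 - α)(x_u + x_v)² + (2α - 1)(x_u² + x_v²) ≥ 0`. A `β`-dimensional subspace on which the form
is at least `α ‖x‖²` meets the span of the eigenvectors with eigenvalue `< α` only in `0`, so at
least `β` eigenvalues are `≥ α`.
-/

/-- The `A_α`-matrix of a graph: `α·D(G) + (1-α)·A(G)`. -/
noncomputable def Aalpha {n : ℕ} (α : ℝ) (G : SimpleGraph (Fin n)) [DecidableRel G.Adj] :
    Matrix (Fin n) (Fin n) ℝ :=
  α • Matrix.diagonal (fun v => (G.degree v : ℝ)) + (1 - α) • G.adjMatrix ℝ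

lemma Aalpha_isHermitian {n : ℕ} (α : ℝ) (G : SimpleGraph (Fin n)) [DecidableRel G.Adj] :
    (Aalpha α G).IsHermitian := by
  apply Matrix.IsHermitian.ext
  intro i j
  by_cases h : G.Adj i j <;> by_cases hij : i = j <;>
    simp_all [Aalpha, Matrix.diagonal_apply, SimpleGraph.adj_comm, eq_comm]


/-- `C` is an edge cover of `G`: a set of edges of `G` covering every vertex. -/
def IsEdgeCoverSet {n : ℕ} (G : SimpleGraph (Fin n)) (C : Finset (Sym2 (Fin n))) : Prop :=
  ↑C ⊆ G.edgeSet ∧ ∀ v : Fin n, ∃ e ∈ C, v ∈ e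

open Finset Matrix Module RealInnerProductSpace

namespace Matrix.IsHermitian

variable {ι : Type*} [Fintype ι] [DecidableEq ι] {A : Matrix ι ι ℝ} (hA : A.IsHermitian)

lemma toEuclideanLin_eigenvectorBasis (i : ι) :
    toEuclideanLin A (hA.eigenvectorBasis i) = hA.eigenvalues i • hA.eigenvectorBasis i := by
  rw [toLpLin_apply, hA.mulVec_eigenvectorBasis]
  rfl

lemma dotProduct_self_eq_sum_sq_inner_eigenvectorBasis (x : ι → ℝ) :
    x ⬝ᵥ x = ∑ i, ⟪hA.eigenvectorBasis i, WithLp.toLp 2 x⟫ ^ 2 := by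
  calc x ⬝ᵥ x = ⟪WithLp.toLp 2 x, WithLp.toLp 2 x⟫ := by
        rw [EuclideanSpace.inner_toLp_toLp, star_trivial]
    _ = _ := by
      rw [← hA.eigenvectorBasis.sum_inner_mul_inner]
      simp only [real_inner_comm, sq]

lemma dotProduct_mulVec_eq_sum_eigenvalues (x : ι → ℝ) :
    x ⬝ᵥ A *ᵥ x = ∑ i, hA.eigenvalues i * ⟪hA.eigenvectorBasis i, WithLp.toLp 2 x⟫ ^ 2 := by
  set y := WithLp.toLp 2 x
  calc x ⬝ᵥ A *ᵥ x = ⟪y, toEuclideanLin A y⟫ := by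
        simp [y, EuclideanSpace.inner_toLp_toLp, toLpLin_apply, dotProduct_comm]
    _ = ∑ i, ⟪y, hA.eigenvectorBasis i⟫ * ⟪hA.eigenvectorBasis i, toEuclideanLin A y⟫ :=
        (hA.eigenvectorBasis.sum_inner_mul_inner _ _).symm
    _ = _ := by
      refine sum_congr rfl fun i _ => ?_
      rw [← isSymmetric_toEuclideanLin_iff.mpr hA, toEuclideanLin_eigenvectorBasis,
        real_inner_smul_left, real_inner_comm]
      ring

/-- The easy half of Courant–Fischer: on `U`, the coordinates along the eigenvectors with
eigenvalue `≥ c` already determine the vector. -/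
theorem finrank_le_card_le_eigenvalues {c : ℝ} {U : Submodule ℝ (ι → ℝ)}
    (hU : ∀ x ∈ U, c * (x ⬝ᵥ x) ≤ x ⬝ᵥ A *ᵥ x) :
    finrank ℝ U ≤ #{i | c ≤ hA.eigenvalues i} := by
  let coeffs : U →ₗ[ℝ] {i // c ≤ hA.eigenvalues i} → ℝ :=
    LinearMap.pi fun i => innerₛₗ ℝ (hA.eigenvectorBasis i) ∘ₗ
      (WithLp.linearEquiv 2 ℝ (ι → ℝ)).symm.toLinearMap ∘ₗ U.subtype
  have hinj : Function.Injective coeffs := by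
    rw [← LinearMap.ker_eq_bot, LinearMap.ker_eq_bot']
    intro x hx
    set a := fun i => ⟪hA.eigenvectorBasis i, WithLp.toLp 2 (x : ι → ℝ)⟫
    have ha_high : ∀ i, c ≤ hA.eigenvalues i → a i = 0 := fun i hi => congr_fun hx ⟨i, hi⟩
    have hterm_nonpos : ∀ i ∈ univ, (hA.eigenvalues i - c) * a i ^ 2 ≤ 0 := by
      intro i _
      rcases le_or_gt c (hA.eigenvalues i) with hi | hi
      · simp [ha_high i hi]
      · exact mul_nonpos_of_nonpos_of_nonneg (by linarith) (sq_nonneg _)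
    have hsum : ∑ i, (hA.eigenvalues i - c) * a i ^ 2 = 0 := by
      refine le_antisymm (sum_nonpos hterm_nonpos) ?_
      have := hU x x.2
      rw [hA.dotProduct_self_eq_sum_sq_inner_eigenvectorBasis,
        hA.dotProduct_mulVec_eq_sum_eigenvalues, mul_sum] at this
      simpa only [sub_mul, sum_sub_distrib, sub_nonneg, a, mul_comm c] using this
    have ha : ∀ i, a i = 0 := by
      intro i
      rcases le_or_gt c (hA.eigenvalues i) with hi | hi
      · exact ha_high i hi
      · simpa [sub_ne_zero.2 hi.ne] using
          (sum_eq_zero_iff_of_nonpos hterm_nonpos).1 hsum i (mem_univ i)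
    have hx0 : (x : ι → ℝ) ⬝ᵥ x = 0 := by
      rw [hA.dotProduct_self_eq_sum_sq_inner_eigenvectorBasis]
      exact sum_eq_zero fun i _ => by simpa [a] using ha i
    exact Subtype.ext (dotProduct_self_eq_zero.1 hx0)
  simpa [Fintype.card_subtype] using LinearMap.finrank_le_finrank_of_injective hinj

end Matrix.IsHermitian

lemma Finset.sum_sum_le_sum_sum_of_add_swap_le {ι M : Type*} [AddCommMonoid M] [LinearOrder M]
    [IsOrderedCancelAddMonoid M] (s : Finset ι) {f g : ι → ι → M}
    (h : ∀ i ∈ s, ∀ j ∈ s, g i j + g j i ≤ f i j + f j i) :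
    ∑ i ∈ s, ∑ j ∈ s, g i j ≤ ∑ i ∈ s, ∑ j ∈ s, f i j := by
  have hsymm : ∀ F : ι → ι → M,
      ∑ i ∈ s, ∑ j ∈ s, F i j + ∑ i ∈ s, ∑ j ∈ s, F i j = ∑ i ∈ s, ∑ j ∈ s, (F i j + F j i) := by
    intro F
    conv_lhs => enter [2]; rw [sum_comm]
    simp only [sum_add_distrib]
  have := hsymm g ▸ hsymm f ▸ sum_le_sum fun i hi => sum_le_sum fun j hj => h i hi j hj
  simpa only [← two_nsmul, nsmul_le_nsmul_iff_right two_ne_zero] using this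

lemma exists_submodule_finrank_eq_card_supported {K ι : Type*} [Field K] [Fintype ι]
    [DecidableEq ι] (T : Finset ι) :
    ∃ U : Submodule K (ι → K), finrank K U = #T ∧ ∀ x ∈ U, ∀ v ∉ T, x v = 0 := by
  refine ⟨Submodule.span K (Set.range fun t : T => Pi.single t.1 1), ?_, fun x hx v hv => ?_⟩
  · have hli := (Pi.linearIndependent_single_one ι K).comp ((↑) : T → ι) Subtype.val_injective
    exact (finrank_span_eq_card hli).trans (Fintype.card_coe T)
  · obtain ⟨c, rfl⟩ := (Submodule.mem_span_range_iff_exists_fun K).1 hx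
    simp [Finset.sum_apply, show ∀ t : T, v ≠ t.1 from fun t h => hv (h ▸ t.2)]

section Aalpha

variable {n : ℕ} {α : ℝ} (G : SimpleGraph (Fin n)) [DecidableRel G.Adj]

lemma Aalpha_apply_self (k : Fin n) : Aalpha α G k k = α * G.degree k := by
  simp [Aalpha]

lemma Aalpha_apply_of_ne {j k : Fin n} (h : k ≠ j) :
    Aalpha α G k j = if G.Adj k j then 1 - α else 0 := by
  simp [Aalpha, h]

lemma sum_norm_Aalpha_offDiag (hα1 : α ≤ 1) (k : Fin n) :
    ∑ j ∈ univ.erase k, ‖Aalpha α G k j‖ = (1 - α) * G.degree k := by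
  rw [G.degree_eq_sum_if_adj (R := ℝ), mul_sum, ← sum_erase univ (a := k) (by simp)]
  refine sum_congr rfl fun j hj => ?_
  rw [Aalpha_apply_of_ne G (ne_comm.1 (ne_of_mem_erase hj))]
  split_ifs <;> simp [abs_of_nonneg (sub_nonneg.2 hα1)]

lemma Aalpha_eigenvalues_le_maxDegree (hα1 : α ≤ 1) (i : Fin n) :
    (Aalpha_isHermitian α G).eigenvalues i ≤ G.maxDegree := by
  have hμ : Module.End.HasEigenvalue (toLin' (Aalpha α G))
      ((Aalpha_isHermitian α G).eigenvalues i) := by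
    rw [Module.End.hasEigenvalue_iff_mem_spectrum, spectrum_toLin']
    exact (Aalpha_isHermitian α G).eigenvalues_mem_spectrum_real i
  obtain ⟨k, hk⟩ := eigenvalue_mem_ball hμ
  rw [Metric.mem_closedBall, Real.dist_eq, sum_norm_Aalpha_offDiag G hα1, Aalpha_apply_self,
    abs_le] at hk
  have : (G.degree k : ℝ) ≤ G.maxDegree := by exact_mod_cast G.degree_le_maxDegree k
  linarith [hk.2]

lemma dotProduct_Aalpha_mulVec (x : Fin n → ℝ) :
    x ⬝ᵥ Aalpha α G *ᵥ x =
      ∑ i, ∑ j, if G.Adj i j then α * x i ^ 2 + (1 - α) * (x i * x j) else 0 := by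
  change x ⬝ᵥ (α • G.degMatrix ℝ + (1 - α) • G.adjMatrix ℝ) *ᵥ x = _
  simp only [add_mulVec, smul_mulVec, dotProduct_add, dotProduct_smul,
    G.dotProduct_mulVec_degMatrix, G.dotProduct_mulVec_adjMatrix, G.degree_eq_sum_if_adj (R := ℝ),
    smul_eq_mul, mul_sum, sum_mul, ← sum_add_distrib]
  refine sum_congr rfl fun i _ => sum_congr rfl fun j _ => ?_
  split_ifs <;> ring

lemma mul_dotProduct_self_le_dotProduct_Aalpha_mulVec (hα0 : 1 / 2 ≤ α) (hα1 : α ≤ 1)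
    {T : Finset (Fin n)} (hT : ∀ u ∈ T, ∃ v ∉ T, G.Adj u v) {x : Fin n → ℝ}
    (hx : ∀ v ∉ T, x v = 0) :
    α * (x ⬝ᵥ x) ≤ x ⬝ᵥ Aalpha α G *ᵥ x := by
  rw [dotProduct_Aalpha_mulVec]
  calc α * (x ⬝ᵥ x)
      ≤ ∑ i, ∑ j, if G.Adj i j ∧ j ∉ T then α * x i ^ 2 else 0 := by
        rw [dotProduct, mul_sum]
        refine sum_le_sum fun i _ => ?_
        have hnonneg : ∀ j ∈ univ, 0 ≤ if G.Adj i j ∧ j ∉ T then α * x i ^ 2 else 0 :=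
          fun j _ => by split_ifs <;> positivity
        by_cases hi : i ∈ T
        · obtain ⟨v, hv, hiv⟩ := hT i hi
          refine le_trans (le_of_eq ?_) (single_le_sum hnonneg (mem_univ v))
          simp [hiv, hv, sq]
        · simp [hx i hi]
    _ ≤ _ := by
      refine sum_sum_le_sum_sum_of_add_swap_le _ fun i _ j _ => ?_
      by_cases hij : G.Adj i j
      · by_cases hi : i ∈ T <;> by_cases hj : j ∈ T <;> simp [hij, hij.symm, hi, hj, hx]
        nlinarith [mul_nonneg (sub_nonneg.2 hα1) (sq_nonneg (x i + x j)),
          mul_nonneg (by linarith : 0 ≤ 2 * α - 1) (add_nonneg (sq_nonneg (x i)) (sq_nonneg (x j)))]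
      · have hji : ¬G.Adj j i := fun h => hij h.symm
        simp [hij, hji]

end Aalpha

section EdgeCover

variable {n : ℕ} {G : SimpleGraph (Fin n)}

lemma IsEdgeCoverSet.exists_private_vertex {C : Finset (Sym2 (Fin n))} (hC : IsEdgeCoverSet G C)
    (hmin : ∀ C', IsEdgeCoverSet G C' → #C ≤ #C') {e : Sym2 (Fin n)} (he : e ∈ C) :
    ∃ v ∈ e, ∀ e' ∈ C, v ∈ e' → e' = e := by
  by_contra! hshared
  have hcover : IsEdgeCoverSet G (C.erase e) := by
    refine ⟨subset_trans (by simp) hC.1, fun v => ?_⟩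
    obtain ⟨e₀, he₀, hv⟩ := hC.2 v
    by_cases h : e₀ = e
    · obtain ⟨e', he', hv', hne⟩ := hshared v (h ▸ hv)
      exact ⟨e', mem_erase.2 ⟨hne, he'⟩, hv'⟩
    · exact ⟨e₀, mem_erase.2 ⟨h, he₀⟩, hv⟩
  exact (card_erase_lt_of_mem he).not_ge (hmin _ hcover)

lemma exists_finset_card_eq_of_isLeast_edgeCover {β : ℕ}
    (hβ : IsLeast {k | ∃ C : Finset (Sym2 (Fin n)), IsEdgeCoverSet G C ∧ #C = k} β) :
    ∃ T : Finset (Fin n), #T = β ∧ ∀ u ∈ T, ∃ v ∉ T, G.Adj u v := by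
  obtain ⟨⟨C, hC, rfl⟩, hmin⟩ := hβ
  choose p hpe hpriv using fun e : C =>
    hC.exists_private_vertex (fun C' hC' => hmin ⟨C', hC', rfl⟩) e.2
  have hp_inj : Function.Injective p := fun e₁ e₂ h =>
    Subtype.ext (hpriv e₂ e₁ e₁.2 (h ▸ hpe e₁))
  refine ⟨univ.image p, by rw [card_image_of_injective _ hp_inj, card_univ, Fintype.card_coe], ?_⟩
  simp only [mem_image, mem_univ, true_and, forall_exists_index, forall_apply_eq_imp_iff]
  intro e
  obtain ⟨v, hv⟩ := Sym2.mem_iff_exists.1 (hpe e)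
  have hadj : G.Adj (p e) v := hC.1 (hv ▸ e.2)
  refine ⟨v, fun ⟨e', he'⟩ => hadj.ne ?_, hadj⟩
  have : e = e' := Subtype.ext (hpriv e' e e.2 (he' ▸ hv ▸ Sym2.mem_mk_right _ _))
  rw [← he', this]

end EdgeCover

open Finset in
theorem Aalpha_count_ge_edge_cover_general (n : ℕ)
    (G : SimpleGraph (Fin n)) [DecidableRel G.Adj]
    (α : ℝ) (hα0 : 1 / 2 ≤ α) (hα1 : α ≤ 1)
    (β : ℕ) (hβ : IsLeast {k | ∃ C : Finset (Sym2 (Fin n)), IsEdgeCoverSet G C ∧ C.card = k} β) :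
    β ≤ (univ.filter fun i : Fin n =>
        α ≤ (Aalpha_isHermitian α G).eigenvalues i ∧
          (Aalpha_isHermitian α G).eigenvalues i ≤ (G.maxDegree : ℝ)).card := by
  obtain ⟨T, rfl, hT⟩ := exists_finset_card_eq_of_isLeast_edgeCover hβ
  obtain ⟨U, hUdim, hUsupp⟩ := exists_submodule_finrank_eq_card_supported (K := ℝ) T
  have hcount := (Aalpha_isHermitian α G).finrank_le_card_le_eigenvalues fun x hx =>
    mul_dotProduct_self_le_dotProduct_Aalpha_mulVec G hα0 hα1 hT (hUsupp x hx)
  have hfilter : ∀ i, α ≤ (Aalpha_isHermitian α G).eigenvalues i ∧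
      (Aalpha_isHermitian α G).eigenvalues i ≤ (G.maxDegree : ℝ) ↔
        α ≤ (Aalpha_isHermitian α G).eigenvalues i := fun i =>
    and_iff_left (Aalpha_eigenvalues_le_maxDegree G hα1 i)
  simpa only [hfilter, hUdim] using hcount

open Finset in
/-- If `G` is connected of order `n ≥ 2` and `α ∈ [1/2, 1]`, then the number of
eigenvalues of `A_α(G)` in `[α, Δ(G)]` (with multiplicity) is at least the edge covering
number `β(G)`. -/
theorem Aalpha_count_ge_edge_cover (n : ℕ) (hn : 2 ≤ n)
    (G : SimpleGraph (Fin n)) [DecidableRel G.Adj] (hconn : G.Connected)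
    (α : ℝ) (hα0 : 1 / 2 ≤ α) (hα1 : α ≤ 1)
    (β : ℕ) (hβ : IsLeast {k | ∃ C : Finset (Sym2 (Fin n)), IsEdgeCoverSet G C ∧ C.card = k} β) :
    β ≤ (univ.filter fun i : Fin n =>
        α ≤ (Aalpha_isHermitian α G).eigenvalues i ∧
          (Aalpha_isHermitian α G).eigenvalues i ≤ (G.maxDegree : ℝ)).card :=
  Aalpha_count_ge_edge_cover_general n G α hα0 hα1 β hβ
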